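/- arXiv:2506.08143 — 2 statements merged into one kernel-verified Lean document; each statement's English description precedes it below -/
import Mathlib

section
/- For a symmetric positive definite matrix M ∈ ℝ^{n×n} and any V ∈ ℝ^{n×k}, the supremum of ⟨MV, H⟩ over all H ∈ ℝ^{n×k} with HᵀH ⪯ I_k equals Tr(√(Vᵀ M² V)). -/
/-!
Put `A = M * V`, so that `Aᵀ * A = Vᵀ * M² * V`. Right multiplication of `A` and `H` by an
orthogonal `U` preserves both the constraint and the pairing, so taking for `U` the eigenvectors of
`Aᵀ * A` reduces to the case `Aᵀ * A = diagonal e`. Then Cauchy–Schwarz on each column bounds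
`⟨A, H⟩` by `∑ i, √(e i)`, and `H = A * diagonal (fun i => (√(e i))⁻¹)` attains the bound
(the junk value `0⁻¹ = 0` is exactly right on the columns with `e i = 0`, which vanish).
-/

open Matrix

/-- The square root of a positive semidefinite matrix, as Mathlib (Dec 2024) defined
`Matrix.PosSemidef.sqrt` (since removed). -/
noncomputable def Matrix.PosSemidef.sqrt {n 𝕜 : Type*} [Fintype n] [DecidableEq n] [RCLike 𝕜]
    [PartialOrder 𝕜] [StarOrderedRing 𝕜]
    {A : Matrix n n 𝕜} (hA : A.PosSemidef) : Matrix n n 𝕜 :=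
  hA.1.eigenvectorUnitary.1 * diagonal ((↑) ∘ (Real.sqrt ·) ∘ hA.1.eigenvalues) *
    (star hA.1.eigenvectorUnitary : Matrix n n 𝕜)

namespace Matrix

variable {m k : Type*} [Fintype m]

lemma PosSemidef.trace_sqrt {𝕜 : Type*} [RCLike 𝕜] [PartialOrder 𝕜] [StarOrderedRing 𝕜]
    [Fintype k] [DecidableEq k] {A : Matrix k k 𝕜} (hA : A.PosSemidef) :
    hA.sqrt.trace = ∑ i, ((√(hA.1.eigenvalues i) : ℝ) : 𝕜) := by
  rw [PosSemidef.sqrt, trace_mul_cycle, Unitary.coe_star_mul_self, one_mul, trace_diagonal]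
  rfl

lemma IsHermitian.star_eigenvectorUnitary_mul_mul_self {𝕜 : Type*} [RCLike 𝕜]
    [Fintype k] [DecidableEq k] {S : Matrix k k 𝕜} (hS : S.IsHermitian) :
    star (hS.eigenvectorUnitary : Matrix k k 𝕜) * S * (hS.eigenvectorUnitary : Matrix k k 𝕜) =
      diagonal (RCLike.ofReal ∘ hS.eigenvalues) := by
  simpa [Unitary.conjStarAlgAut_apply] using hS.conjStarAlgAut_star_eigenvectorUnitary

lemma trace_transpose_mul_eq_sum [Fintype k] (B G : Matrix m k ℝ) :
    (Bᵀ * G).trace = ∑ i, ∑ j, B j i * G j i := by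
  simp [trace, mul_apply]

lemma transpose_mul_self_apply_self (B : Matrix m k ℝ) (i : k) :
    (Bᵀ * B) i i = ∑ j, B j i ^ 2 := by
  simp [mul_apply, sq]

lemma trace_transpose_mul_le [Fintype k] (B G : Matrix m k ℝ) :
    (Bᵀ * G).trace ≤ ∑ i, √((Bᵀ * B) i i) * √((Gᵀ * G) i i) := by
  simp only [trace_transpose_mul_eq_sum, transpose_mul_self_apply_self]
  exact Finset.sum_le_sum fun i _ => Real.sum_mul_le_sqrt_mul_sqrt _ _ _

lemma transpose_mul_self_apply_self_le_one [DecidableEq k] {G : Matrix m k ℝ}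
    (hG : (1 - Gᵀ * G).PosSemidef) (i : k) : (Gᵀ * G) i i ≤ 1 := by
  simpa using hG.diag_nonneg (i := i)

def contractionPairings [Fintype k] [DecidableEq k] (A : Matrix m k ℝ) : Set ℝ :=
  {x | ∃ H : Matrix m k ℝ, (1 - Hᵀ * H).PosSemidef ∧ x = (Aᵀ * H).trace}

lemma contractionPairings_subset_mul [Fintype k] [DecidableEq k] (A : Matrix m k ℝ)
    {U : Matrix k k ℝ} (hU : U ∈ orthogonalGroup k ℝ) :
    contractionPairings A ⊆ contractionPairings (A * U) := by
  rintro _ ⟨H, hH, rfl⟩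
  refine ⟨H * U, ?_, ?_⟩
  · have hUH := hH.conjTranspose_mul_mul_same U
    rw [conjTranspose_eq_transpose_of_trivial, Matrix.mul_sub, Matrix.sub_mul, Matrix.mul_one,
      (mem_orthogonalGroup_iff' k ℝ).mp hU] at hUH
    simpa only [transpose_mul, Matrix.mul_assoc] using hUH
  · rw [transpose_mul, Matrix.mul_assoc, trace_mul_comm Uᵀ]
    simp only [Matrix.mul_assoc, (mem_orthogonalGroup_iff k ℝ).mp hU, Matrix.mul_one]

lemma contractionPairings_mul_orthogonal [Fintype k] [DecidableEq k] (A : Matrix m k ℝ)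
    {U : Matrix k k ℝ} (hU : U ∈ orthogonalGroup k ℝ) :
    contractionPairings (A * U) = contractionPairings A := by
  refine subset_antisymm ?_ (contractionPairings_subset_mul A hU)
  have hUt : Uᵀ ∈ orthogonalGroup k ℝ := by
    rw [mem_orthogonalGroup_iff, transpose_transpose]
    exact (mem_orthogonalGroup_iff' k ℝ).mp hU
  simpa [Matrix.mul_assoc, (mem_orthogonalGroup_iff k ℝ).mp hU] using
    contractionPairings_subset_mul (A * U) hUt

lemma isGreatest_contractionPairings_of_transpose_mul_self_eq_diagonal [Fintype k]
    [DecidableEq k] {B : Matrix m k ℝ} {e : k → ℝ} (hB : Bᵀ * B = diagonal e) :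
    IsGreatest (contractionPairings B) (∑ i, √(e i)) := by
  refine ⟨⟨B * diagonal fun i => (√(e i))⁻¹, ?_, ?_⟩, ?_⟩
  · rw [transpose_mul, diagonal_transpose, Matrix.mul_assoc, ← Matrix.mul_assoc Bᵀ, hB,
      diagonal_mul_diagonal, diagonal_mul_diagonal, ← diagonal_one, diagonal_sub]
    refine posSemidef_diagonal_iff.mpr fun i => ?_
    rw [← div_eq_mul_inv (e i), Real.div_sqrt, inv_mul_eq_div]
    exact sub_nonneg.mpr (div_self_le_one _)
  · rw [← Matrix.mul_assoc, hB, diagonal_mul_diagonal, trace_diagonal]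
    simp_rw [← div_eq_mul_inv, Real.div_sqrt]
  · rintro _ ⟨G, hG, rfl⟩
    calc (Bᵀ * G).trace ≤ ∑ i, √((Bᵀ * B) i i) * √((Gᵀ * G) i i) := trace_transpose_mul_le B G
      _ ≤ ∑ i, √(e i) * 1 := by
        gcongr with i
        · rw [hB, diagonal_apply_eq]
        · exact Real.sqrt_le_one.mpr (transpose_mul_self_apply_self_le_one hG i)
      _ = ∑ i, √(e i) := by simp

theorem isGreatest_contractionPairings [Fintype k] [DecidableEq k] (A : Matrix m k ℝ)
    {S : Matrix k k ℝ} (hS : S.PosSemidef) (hAS : Aᵀ * A = S) :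
    IsGreatest (contractionPairings A) hS.sqrt.trace := by
  set U := hS.1.eigenvectorUnitary
  have hUt : star (U : Matrix k k ℝ) = Uᵀ := by
    rw [star_eq_conjTranspose, conjTranspose_eq_transpose_of_trivial]
  rw [hS.trace_sqrt, ← contractionPairings_mul_orthogonal A U.2]
  refine isGreatest_contractionPairings_of_transpose_mul_self_eq_diagonal ?_
  rw [transpose_mul, Matrix.mul_assoc, ← Matrix.mul_assoc Aᵀ, hAS, ← Matrix.mul_assoc, ← hUt,
    hS.1.star_eigenvectorUnitary_mul_mul_self]
  rfl

end Matrix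

theorem stmt1_general (n k : ℕ) (M : Matrix (Fin n) (Fin n) ℝ) (hM : M.IsSymm)
    (V : Matrix (Fin n) (Fin k) ℝ) (hpsd : (Vᵀ * (M * M) * V).PosSemidef) :
    sSup {x : ℝ | ∃ H : Matrix (Fin n) (Fin k) ℝ,
        ((1 : Matrix (Fin k) (Fin k) ℝ) - Hᵀ * H).PosSemidef ∧
        x = ((M * V)ᵀ * H).trace} = hpsd.sqrt.trace :=
  (isGreatest_contractionPairings (M * V) hpsd
    (by rw [transpose_mul, hM.eq, Matrix.mul_assoc, Matrix.mul_assoc, Matrix.mul_assoc])).csSup_eq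

/-- For symmetric positive definite `M` and any `V`, the supremum of `⟨MV, H⟩`
over `HᵀH ⪯ I` equals `Tr √(Vᵀ M² V)`. -/
theorem stmt1 (n k : ℕ) (M : Matrix (Fin n) (Fin n) ℝ) (hM : M.IsSymm) (hMpd : M.PosDef)
    (V : Matrix (Fin n) (Fin k) ℝ) (hpsd : (Vᵀ * (M * M) * V).PosSemidef) :
    sSup {x : ℝ | ∃ H : Matrix (Fin n) (Fin k) ℝ,
        ((1 : Matrix (Fin k) (Fin k) ℝ) - Hᵀ * H).PosSemidef ∧
        x = ((M * V)ᵀ * H).trace} = hpsd.sqrt.trace :=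
  stmt1_general n k M hM V hpsd
end

section
/- Let G ∈ {0,1}^{n×h} be the group indicator matrix of a partition of [n] into h nonempty groups and Q ∈ {0,1}^{n×k} the cluster indicator matrix of a partition into k nonempty clusters. Define F₀ = G - 1_n zᵀ with z = Gᵀ1_n / n. Then F₀ᵀ Q = 0 if and only if for all s ∈ [h] and l ∈ [k], |V_s ∩ C_l| / |C_l| = |V_s| / n. -/
open Matrix

/-- With indicator matrices `G`, `Q` of partitions into groups and clusters and
`F₀ = G - 1ₙ zᵀ`, `z = Gᵀ1ₙ/n`, we have `F₀ᵀ Q = 0` iff the clustering is group fair: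
`|V_s ∩ C_l|/|C_l| = |V_s|/n` for all `s`, `l`. -/
theorem stmt10 (n h k : ℕ) (hn : 0 < n) (gp : Fin n → Fin h) (cl : Fin n → Fin k)
    (hgp : Function.Surjective gp) (hcl : Function.Surjective cl) :
    let G : Matrix (Fin n) (Fin h) ℝ := Matrix.of fun i s => if gp i = s then 1 else 0
    let Q : Matrix (Fin n) (Fin k) ℝ := Matrix.of fun i l => if cl i = l then 1 else 0
    let z : Fin h → ℝ := fun s => (∑ i, G i s) / n
    let F0 : Matrix (Fin n) (Fin h) ℝ := G - Matrix.of fun _ s => z s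
    (F0ᵀ * Q = 0 ↔ ∀ (s : Fin h) (l : Fin k),
      ((Finset.univ.filter fun i => gp i = s ∧ cl i = l).card : ℝ) /
          ((Finset.univ.filter fun i => cl i = l).card : ℝ) =
        ((Finset.univ.filter fun i => gp i = s).card : ℝ) / n) := by
  intro G Q z F0
  have hzn : (n : ℝ) ≠ 0 := Nat.cast_ne_zero.mpr hn.ne'
  have hb : ∀ l : Fin k, (0 : ℝ) < ((Finset.univ.filter fun i => cl i = l).card : ℝ) := by
    intro l
    obtain ⟨i, hi⟩ := hcl l
    have : i ∈ Finset.univ.filter fun i => cl i = l := by simp [hi]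
    exact_mod_cast Finset.card_pos.mpr ⟨i, this⟩
  have key : ∀ (s : Fin h) (l : Fin k), (F0ᵀ * Q) s l =
      ((Finset.univ.filter fun i => gp i = s ∧ cl i = l).card : ℝ) -
      ((Finset.univ.filter fun i => gp i = s).card : ℝ) / n *
      ((Finset.univ.filter fun i => cl i = l).card : ℝ) := by
    intro s l
    simp only [Matrix.mul_apply, Matrix.transpose_apply, F0, Matrix.sub_apply,
      Matrix.of_apply, G, Q, z, sub_mul, Finset.sum_sub_distrib]
    congr 1
    · rw [← Finset.sum_boole]
      congr 1; ext i
      by_cases h1 : gp i = s <;> by_cases h2 : cl i = l <;> simp [h1, h2]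
    · rw [← Finset.mul_sum]
      congr 1
      · congr 1; rw [← Finset.sum_boole]
      · rw [← Finset.sum_boole]
  constructor
  · intro hF s l
    have h0 : (F0ᵀ * Q) s l = 0 := by rw [hF]; rfl
    rw [key] at h0
    have := sub_eq_zero.mp h0
    rw [div_eq_div_iff (hb l).ne' hzn, this]
    field_simp
  · intro hfair
    ext s l
    rw [key]
    have := hfair s l
    rw [div_eq_div_iff (hb l).ne' hzn] at this
    rw [Matrix.zero_apply, sub_eq_zero]
    field_simp at this ⊢
    linarith [this]
end
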